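/- Let λ ∈ ℂ* and a, b', b'₀ ∈ ℂ. Let W and W₀ be the Verma 𝔚-modules with highest weight vectors w and w₀ of highest weights b' and b'₀ respectively. Then the linear map φ : L(W, λ, a, b'₀ + 1) → L(W₀, λ⁻¹, a, b' + 1) defined by φ((d_{−1}^k w) ⊗ t^l) = λ^{−l} ((a + l − d_{−1})^k w₀) ⊗ t^l, for k ∈ ℤ≥0 and l ∈ ℤ, is an isomorphism of Virasoro modules. -/

import Mathlib

/-- A representation of the Witt algebra `𝔚 = span{d_i : i ≥ -1}`, encoded by the family of
operators `d i` (only the indices `i ≥ -1` are relevant) satisfying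
`[d_m, d_n] = (n - m) d_{m+n}`. -/
structure WittRep (W : Type*) [AddCommGroup W] [Module ℂ W] where
  d : ℤ → W →ₗ[ℂ] W
  comm : ∀ m n : ℤ, -1 ≤ m → -1 ≤ n →
    d m ∘ₗ d n - d n ∘ₗ d m = (((n - m : ℤ) : ℂ)) • d (m + n)

namespace WittRep

variable {W : Type*} [AddCommGroup W] [Module ℂ W]

/-- Condition A : the module lies in the category `O_𝔚`. -/
def InO (ρ : WittRep W) : Prop :=
  ∀ v : W, ∃ n : ℕ, ∀ i : ℤ, (n : ℤ) ≤ i → ρ.d i v = 0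

/-- The module is trivial: the Lie algebra acts by zero. -/
def IsTrivial (ρ : WittRep W) : Prop := ∀ i : ℤ, -1 ≤ i → ρ.d i = 0

/-- A `𝔚`-submodule. -/
def Invariant (ρ : WittRep W) (U : Submodule ℂ W) : Prop :=
  ∀ i : ℤ, -1 ≤ i → ∀ u ∈ U, ρ.d i u ∈ U

/-- Simplicity of a `𝔚`-module. -/
def IsSimple (ρ : WittRep W) : Prop :=
  (∃ v : W, v ≠ 0) ∧ ∀ U : Submodule ℂ W, ρ.Invariant U → U = ⊥ ∨ U = ⊤

/-- A `𝔟`-submodule (`𝔟 = span{d_i : i ≥ 0}`). -/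
def BInvariant (ρ : WittRep W) (U : Submodule ℂ W) : Prop :=
  ∀ i : ℤ, 0 ≤ i → ∀ u ∈ U, ρ.d i u ∈ U

/-- The socle `Soc_𝔟(W)`: the sum of the minimal nonzero `𝔟`-submodules. -/
def Soc (ρ : WittRep W) : Submodule ℂ W :=
  sSup {U | ρ.BInvariant U ∧ U ≠ ⊥ ∧
    ∀ U' : Submodule ℂ W, ρ.BInvariant U' → U' ≠ ⊥ → U' ≤ U → U' = U}

/-- `w₀` is a highest weight vector of weight `b'`. -/
def IsHW (ρ : WittRep W) (w₀ : W) (b' : ℂ) : Prop :=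
  w₀ ≠ 0 ∧ ρ.d 0 w₀ = b' • w₀ ∧ ∀ i : ℤ, 1 ≤ i → ρ.d i w₀ = 0

/-- `w₀` generates the `𝔚`-module. -/
def Generates (ρ : WittRep W) (w₀ : W) : Prop :=
  ∀ U : Submodule ℂ W, ρ.Invariant U → w₀ ∈ U → U = ⊤

/-- The operator `e^{kt} d/dt = Σ_{i ≥ 0} (k^i/i!) d_{i-1}` (a finite sum on each vector of a
module in `O_𝔚`). -/
noncomputable def E (ρ : WittRep W) (k : ℤ) (w : W) : W :=
  ∑ᶠ i : ℕ, (((k : ℂ) ^ i) / (Nat.factorial i : ℂ)) • ρ.d ((i : ℤ) - 1) w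

/-- The action of `d_k` on `L(W, λ, a, b) = W ⊗ ℂ[t, t⁻¹]`, realized on `ℤ →₀ W`
(`w ⊗ t^j ↦ Finsupp.single j w`):
`d_k · (w ⊗ t^j) = ((λ^k e^{kt} − 1) d/dt + a + kb + j) w ⊗ t^{k+j}`. -/
noncomputable def Lact (ρ : WittRep W) (lam a b : ℂ) (k : ℤ) (f : ℤ →₀ W) : ℤ →₀ W :=
  f.sum fun j w => Finsupp.single (k + j)
    (lam ^ k • ρ.E k w - ρ.d (-1) w + (a + (k : ℂ) * b + (j : ℂ)) • w)

/-- The PBW map `ℕ →₀ ℂ → W`, `(k, c) ↦ c • d_{-1}^k w₀`. -/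
noncomputable def pbwMap (ρ : WittRep W) (w₀ : W) : (ℕ →₀ ℂ) →ₗ[ℂ] W :=
  Finsupp.lsum ℂ fun k : ℕ => ((ρ.d (-1)) ^ k) ∘ₗ LinearMap.toSpanSingleton ℂ W w₀

/-- `W` is the Verma `𝔚`-module with highest weight vector `w₀` of highest weight `b'`. -/
def IsVerma (ρ : WittRep W) (w₀ : W) (b' : ℂ) : Prop :=
  ρ.d 0 w₀ = b' • w₀ ∧ (∀ i : ℤ, 1 ≤ i → ρ.d i w₀ = 0) ∧
    Function.Bijective (ρ.pbwMap w₀)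

/-- `W^{(n)} = Σ_{i=0}^n d_{-1}^i (Soc_𝔟 W)`. -/
noncomputable def Wn (ρ : WittRep W) (n : ℕ) : Submodule ℂ W :=
  ⨆ i : Fin (n + 1), Submodule.map ((ρ.d (-1)) ^ (i : ℕ)) ρ.Soc

/-- `L₀(a, b') = span{d₁^i · (w₀ ⊗ t^{2j})} ⊆ L(W, -1, a, b' + 1)`. -/
noncomputable def Lzero (ρ : WittRep W) (a b' : ℂ) (w₀ : W) : Submodule ℂ (ℤ →₀ W) :=
  Submodule.span ℂ
    {g | ∃ (i : ℕ) (j : ℤ), g = (ρ.Lact (-1) a (b' + 1) 1)^[i] (Finsupp.single (2 * j) w₀)}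

/-- `L₁(a, b') = span{d₁^i · (w₀ ⊗ t^{2j+1})} ⊆ L(W, -1, a, b' + 1)`. -/
noncomputable def Lone (ρ : WittRep W) (a b' : ℂ) (w₀ : W) : Submodule ℂ (ℤ →₀ W) :=
  Submodule.span ℂ
    {g | ∃ (i : ℕ) (j : ℤ), g = (ρ.Lact (-1) a (b' + 1) 1)^[i] (Finsupp.single (2 * j + 1) w₀)}

end WittRep

/-- A representation of the Lie algebra `𝔟 = span{d_i : i ≥ 0}`. -/
structure BRep (B : Type*) [AddCommGroup B] [Module ℂ B] where
  d : ℕ → B →ₗ[ℂ] B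
  comm : ∀ m n : ℕ, d m ∘ₗ d n - d n ∘ₗ d m = (((n : ℂ) - (m : ℂ))) • d (m + n)

namespace BRep

variable {B : Type*} [AddCommGroup B] [Module ℂ B]

/-- Condition A : the module lies in the category `O_𝔟`. -/
def InO (ρ : BRep B) : Prop := ∀ v : B, ∃ n : ℕ, ∀ i : ℕ, n ≤ i → ρ.d i v = 0

def IsTrivial (ρ : BRep B) : Prop := ∀ i : ℕ, ρ.d i = 0

def IsSimple (ρ : BRep B) : Prop :=
  (∃ v : B, v ≠ 0) ∧
    ∀ U : Submodule ℂ B, (∀ i : ℕ, ∀ u ∈ U, ρ.d i u ∈ U) → U = ⊥ ∨ U = ⊤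

/-- The set of `r ∈ ℤ≥0` such that `d_{r+i} v = 0` for all `i ≥ 1`;
`ord_𝔟(v)` is its least element. -/
def ordSet (ρ : BRep B) (v : B) : Set ℕ := {r : ℕ | ∀ i : ℕ, r + 1 ≤ i → ρ.d i v = 0}

/-- The action of `d_m` on the Virasoro module `N(B_(c), a) = B ⊗ ℂ[t, t⁻¹]`, realized on
`ℤ →₀ B`:  `d_m · (w ⊗ t^j) = (Σ_{i≥1} (m^i/i!) d_{i-1} + mc + a + j) w ⊗ t^{m+j}`
(`c` is the twist of the `d₀`-action; `c = 0` gives `N(B, a)`). -/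
noncomputable def Nact (ρ : BRep B) (a c : ℂ) (m : ℤ) (f : ℤ →₀ B) : ℤ →₀ B :=
  f.sum fun j w => Finsupp.single (m + j)
    ((∑ᶠ i : ℕ, (((m : ℂ) ^ (i + 1)) / (Nat.factorial (i + 1) : ℂ)) • ρ.d i w) +
      ((m : ℂ) * c + a + (j : ℂ)) • w)

end BRep

/-- For a family `U : ℤ → Submodule ℂ W`, the subspace `⊕_j U j ⊗ t^j` of `W ⊗ ℂ[t,t⁻¹]`. -/
def gradedSub {W : Type*} [AddCommGroup W] [Module ℂ W] (U : ℤ → Submodule ℂ W) :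
    Submodule ℂ (ℤ →₀ W) where
  carrier := {f | ∀ j, f j ∈ U j}
  add_mem' := fun hf hg j => by
    simpa only [Finsupp.add_apply] using (U j).add_mem (hf j) (hg j)
  zero_mem' := fun j => by simp
  smul_mem' := fun c f hf j => by
    simpa only [Finsupp.smul_apply] using (U j).smul_mem c (hf j)

/-- A submodule invariant under a (ℤ-indexed) family of operators. -/
def ActInvariant {V : Type*} [AddCommGroup V] [Module ℂ V] (act : ℤ → V → V)
    (M : Submodule ℂ V) : Prop :=
  ∀ k : ℤ, ∀ u ∈ M, act k u ∈ M

/-- Simplicity of the module given by a family of operators (the central element acts by zero). -/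
def ActSimple {V : Type*} [AddCommGroup V] [Module ℂ V] (act : ℤ → V → V) : Prop :=
  (∃ v : V, v ≠ 0) ∧ ∀ M : Submodule ℂ V, ActInvariant act M → M = ⊥ ∨ M = ⊤

/-- A representation of the Virasoro algebra. -/
structure VirasoroRep (V : Type*) [AddCommGroup V] [Module ℂ V] where
  d : ℤ → V →ₗ[ℂ] V
  z : V →ₗ[ℂ] V
  comm : ∀ m n : ℤ, d m ∘ₗ d n - d n ∘ₗ d m =
    (((n - m : ℤ) : ℂ)) • d (m + n) +
      (if m + n = 0 then (((n : ℂ) ^ 3 - (n : ℂ)) / 12) else 0) • z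
  comm_z : ∀ m : ℤ, d m ∘ₗ z = z ∘ₗ d m

/-!
Identify a Verma module `W` of highest weight `b'` with `ℂ[X]` via `p ↦ p(d₋₁) w`. Since
`[d_{i-1}, d_{-1}] = -i d_{i-2}`, the operator `e^{kt} d/dt` satisfies
`e^{kt} d/dt ∘ p(d₋₁) = p(d₋₁ - k) ∘ e^{kt} d/dt`, and it maps `w` to `(d₋₁ + k b') w`. Hence `d_m`
acts on `p ⊗ t^j` by an explicit polynomial formula, and `φ` becomes
`p ⊗ t^l ↦ λ^{-l} p(a + l - X) ⊗ t^l`. Intertwining is then a polynomial identity: the reflection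
`X ↦ a + l - X` exchanges the roles of `b'` and `b'₀` and of `λ` and `λ⁻¹`.
-/

open Polynomial

lemma pow_div_factorial_succ_mul {K : Type*} [Field K] [CharZero K] (x : K) (i : ℕ) :
    x ^ (i + 1) / ((i + 1).factorial : K) * ((i + 1 : ℕ) : K) =
      x * (x ^ i / (i.factorial : K)) := by
  rw [Nat.factorial_succ]
  push_cast
  field_simp
  ring

open Classical in
noncomputable def Finsupp.mapRangeFamilyLinearEquiv {ι R M N : Type*} [Semiring R]
    [AddCommMonoid M] [Module R M] [AddCommMonoid N] [Module R N] (e : ι → M ≃ₗ[R] N) :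
    (ι →₀ M) ≃ₗ[R] (ι →₀ N) :=
  finsuppLequivDFinsupp R ≪≫ₗ DFinsupp.mapRange.linearEquiv e ≪≫ₗ (finsuppLequivDFinsupp R).symm

lemma Finsupp.mapRangeFamilyLinearEquiv_single {ι R M N : Type*} [Semiring R]
    [AddCommMonoid M] [Module R M] [AddCommMonoid N] [Module R N] (e : ι → M ≃ₗ[R] N) (i : ι)
    (m : M) :
    Finsupp.mapRangeFamilyLinearEquiv e (Finsupp.single i m) = Finsupp.single i (e i m) := by
  classical
  simp [Finsupp.mapRangeFamilyLinearEquiv]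

noncomputable def reflectAround {R : Type*} [CommRing R] (μ : R) : R[X] ≃ₐ[R] R[X] :=
  algEquivOfCompEqX (C μ - X) (C μ - X) (by simp) (by simp)

lemma reflectAround_apply {R : Type*} [CommRing R] (μ : R) (p : R[X]) :
    reflectAround μ p = p.comp (C μ - X) :=
  comp_eq_aeval.symm

/-- The action of `d_m` on `L(W, λ, a, b)` transported along `p ⊗ t^j ↦ p(d₋₁) w ⊗ t^j`, for a
Verma module `W` of highest weight `b'`. -/
noncomputable def vermaLact (b' lam a b : ℂ) (m j : ℤ) (p : ℂ[X]) : ℂ[X] :=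
  lam ^ m • (p.comp (X - C (m : ℂ)) * (X + C ((m : ℂ) * b'))) - X * p +
    C (a + (m : ℂ) * b + (j : ℂ)) * p

lemma vermaLact_comp_reflect {lam : ℂ} (hlam : lam ≠ 0) (a b' b'₀ : ℂ) (m j : ℤ) (p : ℂ[X]) :
    (vermaLact b' lam a (b'₀ + 1) m j p).comp (C (a + ((m + j : ℤ) : ℂ)) - X) =
      lam ^ m • vermaLact b'₀ lam⁻¹ a (b' + 1) m j (p.comp (C (a + (j : ℂ)) - X)) := by
  set r := C (a + ((m + j : ℤ) : ℂ)) - X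
  set s := C (a + (j : ℂ)) - X
  have hr : r = C a + C (m : ℂ) + C (j : ℂ) - X := by
    simp only [r, Int.cast_add, C_add, add_assoc]
  have hs : s = C a + C (j : ℂ) - X := by simp only [s, C_add]
  have h₁ : (p.comp (X - C (m : ℂ))).comp r = p.comp s := by
    rw [comp_assoc, sub_comp, X_comp, C_comp, hr, hs]
    congr 1
    ring
  have h₂ : (p.comp s).comp (X - C (m : ℂ)) = p.comp r := by
    rw [comp_assoc, hs, hr]
    simp only [sub_comp, add_comp, C_comp, X_comp]
    congr 1
    ring
  rw [vermaLact, vermaLact, add_comp, sub_comp, smul_comp, mul_comp, mul_comp, mul_comp, h₁, h₂,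
    smul_add, smul_sub, smul_smul, inv_zpow, mul_inv_cancel₀ (zpow_ne_zero m hlam), one_smul]
  simp only [add_comp, X_comp, C_comp, smul_eq_C_mul]
  simp only [hr, C_add, C_mul, C_1]
  ring

namespace WittRep

variable {W : Type*} [AddCommGroup W] [Module ℂ W] (ρ : WittRep W)

lemma d_comm_apply {m n : ℤ} (hm : -1 ≤ m) (hn : -1 ≤ n) (v : W) :
    ρ.d m (ρ.d n v) = ρ.d n (ρ.d m v) + ((n - m : ℤ) : ℂ) • ρ.d (m + n) v :=
  eq_add_of_sub_eq' (LinearMap.congr_fun (ρ.comm m n hm hn) v)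

lemma E_eq_sum_range (k : ℤ) {v : W} {N : ℕ} (hN : ∀ i : ℤ, N ≤ i → ρ.d i v = 0) :
    ρ.E k v = ∑ i ∈ Finset.range (N + 1),
      ((k : ℂ) ^ i / (i.factorial : ℂ)) • ρ.d ((i : ℤ) - 1) v := by
  refine finsum_eq_sum_of_support_subset _ fun i hi => ?_
  simp only [Function.mem_support, ne_eq] at hi
  simp only [Finset.coe_range, Set.mem_Iio]
  by_contra! hi'
  exact hi (by rw [hN _ (by omega), smul_zero])

lemma E_add (hO : ρ.InO) (k : ℤ) (u v : W) : ρ.E k (u + v) = ρ.E k u + ρ.E k v := by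
  obtain ⟨n, hn⟩ := hO u
  obtain ⟨n', hn'⟩ := hO v
  have hu : ∀ i : ℤ, ↑(n + n') ≤ i → ρ.d i u = 0 := fun i hi => hn i (by omega)
  have hv : ∀ i : ℤ, ↑(n + n') ≤ i → ρ.d i v = 0 := fun i hi => hn' i (by omega)
  rw [ρ.E_eq_sum_range k hu, ρ.E_eq_sum_range k hv,
    ρ.E_eq_sum_range k fun i hi => by rw [map_add, hu i hi, hv i hi, add_zero],
    ← Finset.sum_add_distrib]
  simp only [map_add, smul_add]

lemma E_smul (hO : ρ.InO) (k : ℤ) (c : ℂ) (v : W) : ρ.E k (c • v) = c • ρ.E k v := by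
  obtain ⟨n, hn⟩ := hO v
  rw [ρ.E_eq_sum_range k hn,
    ρ.E_eq_sum_range k fun i hi => by rw [map_smul, hn i hi, smul_zero], Finset.smul_sum]
  simp only [map_smul, smul_comm c]

lemma E_d_neg_one (hO : ρ.InO) (k : ℤ) (v : W) :
    ρ.E k (ρ.d (-1) v) = ρ.d (-1) (ρ.E k v) - (k : ℂ) • ρ.E k v := by
  obtain ⟨n, hn⟩ := hO v
  obtain ⟨n', hn'⟩ := hO (ρ.d (-1) v)
  set c : ℕ → ℂ := fun i => (k : ℂ) ^ i / (i.factorial : ℂ)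
  have hv : ∀ i : ℤ, ↑(n + n') ≤ i → ρ.d i v = 0 := fun i hi => hn i (by omega)
  have hdv : ∀ i : ℤ, ↑(n + n' + 1) ≤ i → ρ.d i (ρ.d (-1) v) = 0 :=
    fun i hi => hn' i (by omega)
  have hcomm (i : ℕ) : ρ.d ((i : ℤ) - 1) (ρ.d (-1) v) =
      ρ.d (-1) (ρ.d ((i : ℤ) - 1) v) - (i : ℂ) • ρ.d (((i : ℤ) - 1) - 1) v := by
    rw [ρ.d_comm_apply (by omega) le_rfl, sub_eq_add_neg _ ((i : ℂ) • _), ← neg_smul,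
      ← Int.sub_eq_add_neg]
    congr 2
    push_cast
    ring
  have hshift : ∑ i ∈ Finset.range (n + n' + 1 + 1), (c i * i) • ρ.d (((i : ℤ) - 1) - 1) v =
      (k : ℂ) • ρ.E k v := by
    rw [Finset.sum_range_succ', ρ.E_eq_sum_range k hv, Finset.smul_sum]
    simp only [Nat.cast_zero, mul_zero, zero_smul, add_zero, c, smul_smul]
    refine Finset.sum_congr rfl fun i _ => ?_
    rw [pow_div_factorial_succ_mul]
    congr 3
    omega
  rw [← hshift, ρ.E_eq_sum_range k hdv,
    ρ.E_eq_sum_range k (N := n + n' + 1) (fun i hi => hv i (by omega)), map_sum,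
    ← Finset.sum_sub_distrib]
  refine Finset.sum_congr rfl fun i _ => ?_
  rw [hcomm, smul_sub, map_smul, smul_smul]

lemma E_aeval (hO : ρ.InO) (k : ℤ) (p : ℂ[X]) (v : W) :
    ρ.E k (aeval (ρ.d (-1)) p v) = aeval (ρ.d (-1)) (p.comp (X - C (k : ℂ))) (ρ.E k v) := by
  induction p using Polynomial.induction_on with
  | C c => simp [ρ.E_smul hO]
  | add p q hp hq => simp [ρ.E_add hO, hp, hq]
  | monomial n c ih =>
    set q := C c * X ^ n
    rw [pow_succ', mul_left_comm, map_mul, Module.End.mul_apply, aeval_X, ρ.E_d_neg_one hO, ih,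
      mul_comp X q, X_comp, map_mul, Module.End.mul_apply]
    simp [Int.cast_smul_eq_zsmul]

noncomputable def evalAt (w : W) : ℂ[X] →ₗ[ℂ] W :=
  LinearMap.applyₗ w ∘ₗ (aeval (ρ.d (-1))).toLinearMap

lemma evalAt_apply (w : W) (p : ℂ[X]) : ρ.evalAt w p = aeval (ρ.d (-1)) p w := rfl

lemma pbwMap_eq_evalAt_comp (w : W) :
    ρ.pbwMap w = ρ.evalAt w ∘ₗ (basisMonomials ℂ).repr.symm.toLinearMap := by
  refine Finsupp.lhom_ext fun k c => ?_
  simp [pbwMap, evalAt_apply, coe_basisMonomials]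

lemma IsVerma.bijective_evalAt {w : W} {b' : ℂ} (h : ρ.IsVerma w b') :
    Function.Bijective (ρ.evalAt w) := by
  have := h.2.2
  rw [pbwMap_eq_evalAt_comp, LinearMap.coe_comp, LinearEquiv.coe_coe] at this
  simpa using this.comp (basisMonomials ℂ).repr.bijective

lemma E_highestWeight {w : W} {b' : ℂ} (hw0 : ρ.d 0 w = b' • w)
    (hw1 : ∀ i : ℤ, 1 ≤ i → ρ.d i w = 0) (k : ℤ) :
    ρ.E k w = ρ.evalAt w (X + C ((k : ℂ) * b')) := by
  rw [ρ.E_eq_sum_range k (N := 1) hw1, Finset.sum_range_succ, Finset.sum_range_one]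
  simp [evalAt_apply, hw0]
  module

lemma E_evalAt (hO : ρ.InO) {w : W} {b' : ℂ} (hw0 : ρ.d 0 w = b' • w)
    (hw1 : ∀ i : ℤ, 1 ≤ i → ρ.d i w = 0) (k : ℤ) (p : ℂ[X]) :
    ρ.E k (ρ.evalAt w p) = ρ.evalAt w (p.comp (X - C (k : ℂ)) * (X + C ((k : ℂ) * b'))) := by
  rw [evalAt_apply, ρ.E_aeval hO, ρ.E_highestWeight hw0 hw1, evalAt_apply, evalAt_apply,
    ← Module.End.mul_apply, ← map_mul]

lemma Lact_single (lam a b : ℂ) (k j : ℤ) (v : W) :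
    ρ.Lact lam a b k (Finsupp.single j v) = Finsupp.single (k + j)
      (lam ^ k • ρ.E k v - ρ.d (-1) v + (a + (k : ℂ) * b + (j : ℂ)) • v) := by
  rw [Lact, Finsupp.sum_single_index]
  simp [E]

lemma Lact_add (hO : ρ.InO) (lam a b : ℂ) (k : ℤ) (f g : ℤ →₀ W) :
    ρ.Lact lam a b k (f + g) = ρ.Lact lam a b k f + ρ.Lact lam a b k g := by
  refine Finsupp.sum_add_index' (fun j => by simp [E]) fun j u v => ?_
  rw [← Finsupp.single_add, ρ.E_add hO]
  congr 1
  simp only [map_add, smul_add]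
  abel

lemma Lact_smul (hO : ρ.InO) (lam a b : ℂ) (k : ℤ) (c : ℂ) (f : ℤ →₀ W) :
    ρ.Lact lam a b k (c • f) = c • ρ.Lact lam a b k f := by
  rw [Lact, Finsupp.sum_smul_index' fun j => by simp [E], Lact, Finsupp.smul_sum]
  refine Finsupp.sum_congr fun j _ => ?_
  rw [Finsupp.smul_single, ρ.E_smul hO, map_smul]
  congr 1
  module

lemma Lact_single_evalAt (hO : ρ.InO) {w : W} {b' : ℂ} (hw0 : ρ.d 0 w = b' • w)
    (hw1 : ∀ i : ℤ, 1 ≤ i → ρ.d i w = 0) (lam a b : ℂ) (m j : ℤ) (p : ℂ[X]) :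
    ρ.Lact lam a b m (Finsupp.single j (ρ.evalAt w p)) =
      Finsupp.single (m + j) (ρ.evalAt w (vermaLact b' lam a b m j p)) := by
  rw [ρ.Lact_single, ρ.E_evalAt hO hw0 hw1, vermaLact, map_add, map_sub, map_smul,
    ← smul_eq_C_mul, map_smul]
  congr 2
  simp [evalAt_apply]

end WittRep

theorem stmt18 {W W₀ : Type*} [AddCommGroup W] [Module ℂ W] [AddCommGroup W₀] [Module ℂ W₀]
    (ρ : WittRep W) (ρ₀ : WittRep W₀) (hO : ρ.InO) (hO₀ : ρ₀.InO)
    (lam a b' b'₀ : ℂ) (hlam : lam ≠ 0)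
    (w : W) (w₀ : W₀) (hV : ρ.IsVerma w b') (hV₀ : ρ₀.IsVerma w₀ b'₀) :
    ∃ φ : (ℤ →₀ W) ≃ₗ[ℂ] (ℤ →₀ W₀),
      (∀ (k : ℕ) (l : ℤ),
        φ (Finsupp.single l (((ρ.d (-1)) ^ k) w)) =
          lam ^ (-l) • Finsupp.single l
            ((((a + (l : ℂ)) • (LinearMap.id : W₀ →ₗ[ℂ] W₀) - ρ₀.d (-1)) ^ k) w₀)) ∧
      (∀ (m : ℤ) (f : ℤ →₀ W),
        φ (ρ.Lact lam a (b'₀ + 1) m f) = ρ₀.Lact lam⁻¹ a (b' + 1) m (φ f)) := by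
  let e := LinearEquiv.ofBijective _ hV.bijective_evalAt
  let e₀ := LinearEquiv.ofBijective _ hV₀.bijective_evalAt
  let ψ : ℤ → W ≃ₗ[ℂ] W₀ := fun l => e.symm ≪≫ₗ (reflectAround (a + l)).toLinearEquiv ≪≫ₗ e₀ ≪≫ₗ
    LinearEquiv.smulOfNeZero ℂ W₀ (lam ^ (-l)) (zpow_ne_zero _ hlam)
  let φ := Finsupp.mapRangeFamilyLinearEquiv ψ
  have hφ (l : ℤ) (p : ℂ[X]) : φ (Finsupp.single l (ρ.evalAt w p)) =
      lam ^ (-l) • Finsupp.single l (ρ₀.evalAt w₀ (p.comp (C (a + (l : ℂ)) - X))) := by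
    rw [Finsupp.mapRangeFamilyLinearEquiv_single, Finsupp.smul_single]
    simp [ψ, e, e₀, reflectAround_apply, LinearEquiv.ofBijective_symm_apply_apply]
  refine ⟨φ, fun k l => ?_, fun m f => ?_⟩
  · rw [show ((ρ.d (-1)) ^ k) w = ρ.evalAt w (X ^ k) by simp [WittRep.evalAt_apply], hφ,
      X_pow_comp]
    simp only [WittRep.evalAt_apply, map_pow, map_sub, aeval_C, aeval_X,
      Module.algebraMap_end_eq_smul_id]
  · induction f using Finsupp.induction_linear with
    | zero => simp [WittRep.Lact]
    | add f g hf hg => rw [ρ.Lact_add hO, map_add, hf, hg, map_add, ρ₀.Lact_add hO₀]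
    | single j v =>
      obtain ⟨p, rfl⟩ := hV.bijective_evalAt.2 v
      rw [ρ.Lact_single_evalAt hO hV.1 hV.2.1, hφ, hφ, ρ₀.Lact_smul hO₀,
        ρ₀.Lact_single_evalAt hO₀ hV₀.1 hV₀.2.1, vermaLact_comp_reflect hlam, map_smul,
        Finsupp.smul_single, smul_smul, ← zpow_add₀ hlam, neg_add_rev, neg_add_cancel_right,
        Finsupp.smul_single]
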